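/- A brane scale function f is of class (B) with constant γ̃ = (n−1)/2 (i.e. the limit lim_{τ→0⁻} f′(τ)²·e^{(n−1)f(τ)} exists and is a positive real number) if and only if ω₀ ≤ −(n−1)/2. In that case the mass equals m̃ = m + (κ²/n²)·ρ₀² if ω₀ = −(n−1)/2, and m̃ = m if ω₀ < −(n−1)/2. -/
import Mathlib



/-- A brane scale function is of class (B) with constant `γ = (n-1)/2` (i.e.
`f'² e^{(n-1)f}` converges to a positive limit as `τ → 0⁻`) iff `ω₀ ≤ -(n-1)/2`;
the mass is `m + (κ²/n²) ρ₀²` if `ω₀ = -(n-1)/2` and `m` if `ω₀ < -(n-1)/2`. -/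
theorem classB_gamma_critical
    (n : ℕ) (hn : 3 ≤ n)
    (m Λ κt κ σ ω₀ ρ₀ : ℝ)
    (hm : 0 < m) (hΛ : Λ ≤ 0)
    (hκt : κt = -1 ∨ κt = 0 ∨ κt = 1) (hΛκt : Λ = 0 → κt = 1)
    (hκ : κ ≠ 0) (hρ₀ : 0 < ρ₀)
    (lam μt : ℝ → ℝ)
    (hlam : ContDiff ℝ (⊤ : ℕ∞) lam)
    (hlam0 : Filter.Tendsto lam Filter.atBot (nhds 0))
    (hμt : ∀ t : ℝ, HasDerivAt μt (lam t) t)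
    (hμt0 : Filter.Tendsto μt Filter.atBot (nhds 0))
    (a : ℝ) (ha : 0 < a) (f : ℝ → ℝ)
    (hf : ContDiffOn ℝ (⊤ : ℕ∞) f (Set.Ioo (-a) 0))
    (hf' : ∀ τ ∈ Set.Ioo (-a) (0:ℝ), deriv f τ < 0)
    (hfb : Filter.Tendsto f (nhdsWithin 0 (Set.Iio 0)) Filter.atBot)
    (hFried : ∀ τ ∈ Set.Ioo (-a) (0:ℝ),
      (deriv f τ) ^ 2
        = m * Real.exp (-((n : ℝ) - 1) * f τ)
          + (2 * Λ / ((n : ℝ) * ((n : ℝ) + 1))) * Real.exp (2 * f τ) - κt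
          + (κ ^ 2 / (n : ℝ) ^ 2)
            * (σ + ρ₀ * Real.exp (-((n : ℝ) + ω₀) * f τ - μt (f τ))) ^ 2
            * Real.exp (2 * f τ))
    :
    ((∃ mt : ℝ, 0 < mt
        ∧ Filter.Tendsto (fun τ => (deriv f τ) ^ 2 * Real.exp (((n : ℝ) - 1) * f τ))
            (nhdsWithin 0 (Set.Iio 0)) (nhds mt))
      ↔ ω₀ ≤ -((n : ℝ) - 1) / 2)
    ∧ (ω₀ = -((n : ℝ) - 1) / 2 →
        Filter.Tendsto (fun τ => (deriv f τ) ^ 2 * Real.exp (((n : ℝ) - 1) * f τ))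
          (nhdsWithin 0 (Set.Iio 0)) (nhds (m + κ ^ 2 / (n : ℝ) ^ 2 * ρ₀ ^ 2)))
    ∧ (ω₀ < -((n : ℝ) - 1) / 2 →
        Filter.Tendsto (fun τ => (deriv f τ) ^ 2 * Real.exp (((n : ℝ) - 1) * f τ))
          (nhdsWithin 0 (Set.Iio 0)) (nhds m)) := by

  classical
  have hn3 : (3:ℝ) ≤ (n:ℝ) := by exact_mod_cast hn
  have hn1 : (0:ℝ) < (n:ℝ) - 1 := by linarith
  have hn1' : (0:ℝ) < (n:ℝ) + 1 := by linarith
  have hnpos : (0:ℝ) < (n:ℝ) := by linarith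
  have hc2 : (0:ℝ) < κ ^ 2 / (n:ℝ) ^ 2 := by positivity
  have hmem : Set.Ioo (-a) (0:ℝ) ∈ nhdsWithin (0:ℝ) (Set.Iio 0) :=
    Ioo_mem_nhdsLT_of_mem (by constructor <;> linarith)
  -- eventual equality with a function of f τ
  have hEq : ∀ᶠ τ in nhdsWithin (0:ℝ) (Set.Iio 0),
      (deriv f τ) ^ 2 * Real.exp (((n:ℝ) - 1) * f τ)
        = m + (2 * Λ / ((n:ℝ) * ((n:ℝ) + 1))) * Real.exp (((n:ℝ) + 1) * f τ)
          - κt * Real.exp (((n:ℝ) - 1) * f τ)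
          + (κ ^ 2 / (n:ℝ) ^ 2) * (σ * Real.exp ((((n:ℝ) + 1) / 2) * f τ)
              + ρ₀ * Real.exp (((1 - (n:ℝ)) / 2 - ω₀) * f τ - μt (f τ))) ^ 2 := by
    filter_upwards [hmem] with τ hτ
    rw [hFried τ hτ]
    set x := f τ with hx
    have e1 : Real.exp (-((n:ℝ) - 1) * x) * Real.exp (((n:ℝ) - 1) * x) = 1 := by
      rw [← Real.exp_add, show -((n:ℝ) - 1) * x + ((n:ℝ) - 1) * x = 0 by ring, Real.exp_zero]
    have e2 : Real.exp (2 * x) * Real.exp (((n:ℝ) - 1) * x) = Real.exp (((n:ℝ) + 1) * x) := by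
      rw [← Real.exp_add]; ring_nf
    have e4 : Real.exp (((n:ℝ) + 1) * x) = (Real.exp ((((n:ℝ) + 1) / 2) * x)) ^ 2 := by
      rw [sq, ← Real.exp_add]; ring_nf
    have e3 : Real.exp (-((n:ℝ) + ω₀) * x - μt x) * Real.exp ((((n:ℝ) + 1) / 2) * x)
        = Real.exp (((1 - (n:ℝ)) / 2 - ω₀) * x - μt x) := by
      rw [← Real.exp_add]; ring_nf
    linear_combination m * e1 + (2 * Λ / ((n:ℝ) * ((n:ℝ) + 1))) * e2
      + (κ ^ 2 / (n:ℝ) ^ 2) * (σ + ρ₀ * Real.exp (-((n:ℝ) + ω₀) * x - μt x)) ^ 2 * e2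
      + (κ ^ 2 / (n:ℝ) ^ 2) * (σ + ρ₀ * Real.exp (-((n:ℝ) + ω₀) * x - μt x)) ^ 2 * e4
      + (κ ^ 2 / (n:ℝ) ^ 2) * ρ₀ * (2 * σ * Real.exp ((((n:ℝ) + 1) / 2) * x)
          + ρ₀ * Real.exp (-((n:ℝ) + ω₀) * x - μt x) * Real.exp ((((n:ℝ) + 1) / 2) * x)
          + ρ₀ * Real.exp (((1 - (n:ℝ)) / 2 - ω₀) * x - μt x)) * e3
  -- basic limits
  have T1 : Filter.Tendsto (fun x : ℝ => Real.exp (((n:ℝ) + 1) * x)) Filter.atBot (nhds 0) :=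
    Real.tendsto_exp_atBot.comp (Filter.Tendsto.const_mul_atBot hn1' Filter.tendsto_id)
  have T2 : Filter.Tendsto (fun x : ℝ => Real.exp (((n:ℝ) - 1) * x)) Filter.atBot (nhds 0) :=
    Real.tendsto_exp_atBot.comp (Filter.Tendsto.const_mul_atBot hn1 Filter.tendsto_id)
  have T3 : Filter.Tendsto (fun x : ℝ => Real.exp ((((n:ℝ) + 1) / 2) * x)) Filter.atBot (nhds 0) :=
    Real.tendsto_exp_atBot.comp (Filter.Tendsto.const_mul_atBot (by linarith) Filter.tendsto_id)
  -- main combined-limit lemma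
  have hmain : ∀ ℓ : ℝ,
      Filter.Tendsto (fun x : ℝ => Real.exp (((1 - (n:ℝ)) / 2 - ω₀) * x - μt x))
        Filter.atBot (nhds ℓ) →
      Filter.Tendsto (fun τ => (deriv f τ) ^ 2 * Real.exp (((n:ℝ) - 1) * f τ))
        (nhdsWithin (0:ℝ) (Set.Iio 0))
        (nhds (m + κ ^ 2 / (n:ℝ) ^ 2 * ρ₀ ^ 2 * ℓ ^ 2)) := by
    intro ℓ hℓ
    have hG : Filter.Tendsto (fun x : ℝ =>
        m + (2 * Λ / ((n:ℝ) * ((n:ℝ) + 1))) * Real.exp (((n:ℝ) + 1) * x)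
          - κt * Real.exp (((n:ℝ) - 1) * x)
          + (κ ^ 2 / (n:ℝ) ^ 2) * (σ * Real.exp ((((n:ℝ) + 1) / 2) * x)
              + ρ₀ * Real.exp (((1 - (n:ℝ)) / 2 - ω₀) * x - μt x)) ^ 2)
        Filter.atBot
        (nhds (m + (2 * Λ / ((n:ℝ) * ((n:ℝ) + 1))) * 0 - κt * 0
          + (κ ^ 2 / (n:ℝ) ^ 2) * (σ * 0 + ρ₀ * ℓ) ^ 2)) := by
      exact (((tendsto_const_nhds.add (tendsto_const_nhds.mul T1)).sub
        (tendsto_const_nhds.mul T2)).add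
        (tendsto_const_nhds.mul (((tendsto_const_nhds.mul T3).add
          (tendsto_const_nhds.mul hℓ)).pow 2)))
    have := (hG.comp hfb).congr' (by filter_upwards [hEq] with τ h; exact h.symm)
    convert this using 2
    ring
  -- the divergent case
  have hdiv : -((n:ℝ) - 1) / 2 < ω₀ →
      Filter.Tendsto (fun τ => (deriv f τ) ^ 2 * Real.exp (((n:ℝ) - 1) * f τ))
        (nhdsWithin (0:ℝ) (Set.Iio 0)) Filter.atTop := by
    intro hω
    have hc : ((1 - (n:ℝ)) / 2 - ω₀) < 0 := by linarith
    have hx : Filter.Tendsto (fun x : ℝ => ((1 - (n:ℝ)) / 2 - ω₀) * x - μt x)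
        Filter.atBot Filter.atTop := by
      have h1 : Filter.Tendsto (fun x : ℝ => ((1 - (n:ℝ)) / 2 - ω₀) * x)
          Filter.atBot Filter.atTop := by
        have h0 := Filter.Tendsto.const_mul_atBot (r := -((1 - (n:ℝ)) / 2 - ω₀))
          (by linarith) (Filter.tendsto_id (α := ℝ) (x := Filter.atBot))
        refine (Filter.tendsto_neg_atBot_atTop.comp h0).congr fun x => ?_
        simp only [Function.comp_apply, id_eq]
        ring
      have h2 : Filter.Tendsto (fun x : ℝ => -μt x) Filter.atBot (nhds 0) := by
        simpa using hμt0.neg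
      exact (h2.add_atTop h1).congr fun x => by ring
    have hE : Filter.Tendsto (fun x : ℝ => Real.exp (((1 - (n:ℝ)) / 2 - ω₀) * x - μt x))
        Filter.atBot Filter.atTop := Real.tendsto_exp_atTop.comp hx
    have hinner : Filter.Tendsto (fun x : ℝ => σ * Real.exp ((((n:ℝ) + 1) / 2) * x)
        + ρ₀ * Real.exp (((1 - (n:ℝ)) / 2 - ω₀) * x - μt x)) Filter.atBot Filter.atTop :=
      (tendsto_const_nhds.mul T3).add_atTop (Filter.Tendsto.const_mul_atTop hρ₀ hE)
    have hsq : Filter.Tendsto (fun x : ℝ => (σ * Real.exp ((((n:ℝ) + 1) / 2) * x)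
        + ρ₀ * Real.exp (((1 - (n:ℝ)) / 2 - ω₀) * x - μt x)) ^ 2) Filter.atBot Filter.atTop :=
      (Filter.tendsto_pow_atTop (two_ne_zero)).comp hinner
    have hG : Filter.Tendsto (fun x : ℝ =>
        m + (2 * Λ / ((n:ℝ) * ((n:ℝ) + 1))) * Real.exp (((n:ℝ) + 1) * x)
          - κt * Real.exp (((n:ℝ) - 1) * x)
          + (κ ^ 2 / (n:ℝ) ^ 2) * (σ * Real.exp ((((n:ℝ) + 1) / 2) * x)
              + ρ₀ * Real.exp (((1 - (n:ℝ)) / 2 - ω₀) * x - μt x)) ^ 2)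
        Filter.atBot Filter.atTop :=
      Filter.Tendsto.add_atTop
        ((tendsto_const_nhds.add (tendsto_const_nhds.mul T1)).sub (tendsto_const_nhds.mul T2))
        (Filter.Tendsto.const_mul_atTop hc2 hsq)
    exact (hG.comp hfb).congr' (by filter_upwards [hEq] with τ h; exact h.symm)
  -- limit in the equality case
  have hcase_eq : ω₀ = -((n:ℝ) - 1) / 2 →
      Filter.Tendsto (fun τ => (deriv f τ) ^ 2 * Real.exp (((n:ℝ) - 1) * f τ))
        (nhdsWithin (0:ℝ) (Set.Iio 0)) (nhds (m + κ ^ 2 / (n:ℝ) ^ 2 * ρ₀ ^ 2)) := by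
    intro hω
    have hc : (1 - (n:ℝ)) / 2 - ω₀ = 0 := by rw [hω]; ring
    have hℓ : Filter.Tendsto (fun x : ℝ => Real.exp (((1 - (n:ℝ)) / 2 - ω₀) * x - μt x))
        Filter.atBot (nhds 1) := by
      have h2 : Filter.Tendsto (fun x : ℝ => -μt x) Filter.atBot (nhds 0) := by
        simpa using hμt0.neg
      have := (Real.continuous_exp.tendsto 0).comp h2
      rw [Real.exp_zero] at this
      refine this.congr fun x => ?_
      simp [hc]
    simpa using hmain 1 hℓ
  -- limit in the strict case
  have hcase_lt : ω₀ < -((n:ℝ) - 1) / 2 →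
      Filter.Tendsto (fun τ => (deriv f τ) ^ 2 * Real.exp (((n:ℝ) - 1) * f τ))
        (nhdsWithin (0:ℝ) (Set.Iio 0)) (nhds m) := by
    intro hω
    have hc : (0:ℝ) < (1 - (n:ℝ)) / 2 - ω₀ := by linarith
    have hx : Filter.Tendsto (fun x : ℝ => ((1 - (n:ℝ)) / 2 - ω₀) * x - μt x)
        Filter.atBot Filter.atBot := by
      have h1 : Filter.Tendsto (fun x : ℝ => ((1 - (n:ℝ)) / 2 - ω₀) * x)
          Filter.atBot Filter.atBot :=
        Filter.Tendsto.const_mul_atBot hc Filter.tendsto_id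
      have h2 : Filter.Tendsto (fun x : ℝ => -μt x) Filter.atBot (nhds 0) := by
        simpa using hμt0.neg
      exact (h2.add_atBot h1).congr fun x => by ring
    have hℓ : Filter.Tendsto (fun x : ℝ => Real.exp (((1 - (n:ℝ)) / 2 - ω₀) * x - μt x))
        Filter.atBot (nhds 0) := Real.tendsto_exp_atBot.comp hx
    simpa using hmain 0 hℓ
  refine ⟨⟨?_, ?_⟩, hcase_eq, hcase_lt⟩
  · rintro ⟨mt, hmt, hten⟩
    by_contra hω
    push_neg at hω
    exact not_tendsto_nhds_of_tendsto_atTop (hdiv hω) mt hten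
  · intro hω
    rcases lt_or_eq_of_le hω with h | h
    · exact ⟨m, hm, hcase_lt h⟩
    · exact ⟨m + κ ^ 2 / (n:ℝ) ^ 2 * ρ₀ ^ 2, by positivity, hcase_eq h⟩
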